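/- arXiv:2103.06169 — 7 statements merged into one kernel-verified Lean document; each statement's English description precedes it below -/
import Mathlib

section
/- Let ρ be a permutation of V = F_2^n with ρ(0)=0, and let ρ̄ : V⁴ → V⁴ be the AES-like key-schedule operator induced by ρ. If U ≤ V⁴ is an F_2-subspace invariant under ρ̄ (i.e. U ρ̄ = U), and D'' = { d ∈ V | (0,0,0,d) ∈ U }, then ρ(D'') = D''. -/
abbrev V (n : ℕ) := Fin n → ZMod 2

/-- The AES-like key-schedule operator induced by a permutation `ρ` of `V`. -/
def rhoBar {n : ℕ} (ρ : Equiv.Perm (V n)) :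
    V n × V n × V n × V n → V n × V n × V n × V n :=
  fun v => (v.1 + ρ v.2.2.2,
            v.1 + v.2.1 + ρ v.2.2.2,
            v.1 + v.2.1 + v.2.2.1 + ρ v.2.2.2,
            v.1 + v.2.1 + v.2.2.1 + v.2.2.2 + ρ v.2.2.2)

lemma Vn_add_self {n : ℕ} (x : V n) : x + x = 0 := by
  funext i
  exact CharTwo.add_self_eq_zero _

lemma rhoBar_injective {n : ℕ} (ρ : Equiv.Perm (V n)) :
    Function.Injective (rhoBar ρ) := by
  rintro ⟨a, b, c, e⟩ ⟨a', b', c', e'⟩ h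
  simp only [rhoBar, Prod.mk.injEq] at h
  obtain ⟨h1, h2, h3, h4⟩ := h
  have he : e = e' := by linear_combination h4 - h3
  subst he
  have ha : a = a' := by linear_combination h1
  have hb : b = b' := by linear_combination h2 - h1
  have hc : c = c' := by linear_combination h3 - h2
  simp [ha, hb, hc]

theorem rho_invariant_on_Dpp {n : ℕ} (ρ : Equiv.Perm (V n)) (h0 : ρ 0 = 0)
    (U : Submodule (ZMod 2) (V n × V n × V n × V n))
    (hU : rhoBar ρ '' (U : Set (V n × V n × V n × V n)) = U) :
    (⇑ρ) '' {d : V n | ((0 : V n), (0 : V n), (0 : V n), d) ∈ U} =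
      {d : V n | ((0 : V n), (0 : V n), (0 : V n), d) ∈ U} := by
  set D : Set (V n) := {d : V n | ((0 : V n), (0 : V n), (0 : V n), d) ∈ U} with hD
  have two := @Vn_add_self n
  have fwd : ∀ s, s ∈ U → rhoBar ρ s ∈ U := by
    intro s hs
    have : rhoBar ρ s ∈ rhoBar ρ '' (U : Set _) := Set.mem_image_of_mem _ hs
    rwa [hU] at this
  have bwd : ∀ s, rhoBar ρ s ∈ U → s ∈ U := by
    intro s hs
    have : rhoBar ρ s ∈ rhoBar ρ '' (U : Set _) := by rwa [hU]
    obtain ⟨u, hu, heq⟩ := this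
    have : u = s := rhoBar_injective ρ heq
    rwa [this] at hu
  have hsub : ρ '' D ⊆ D := by
    rintro _ ⟨d, hd, rfl⟩
    simp only [hD, Set.mem_setOf_eq] at hd ⊢
    -- h1 : (ρd, ρd, ρd, d + ρd) ∈ U
    have h1 : ((ρ d, ρ d, ρ d, d + ρ d) : V n × V n × V n × V n) ∈ U := by
      have := fwd _ hd
      simpa [rhoBar] using this
    -- h2 : (ρd, 0, 0, d) ∈ U
    have h2 : ((ρ d, 0, 0, d) : V n × V n × V n × V n) ∈ U := by
      apply bwd
      have e : rhoBar ρ ((ρ d, 0, 0, d) : V n × V n × V n × V n)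
          = (0, 0, 0, d) := by
        simp only [rhoBar]
        refine Prod.ext ?_ (Prod.ext ?_ (Prod.ext ?_ ?_)) <;>
          · simp only
            first
              | ring1
              | linear_combination two (ρ d)
      rw [e]; exact hd
    -- h3 : (0, ρd, ρd, ρd) ∈ U
    have h3 : ((0, ρ d, ρ d, ρ d) : V n × V n × V n × V n) ∈ U := by
      have := U.add_mem h1 h2
      have e : ((ρ d, ρ d, ρ d, d + ρ d) : V n × V n × V n × V n)
          + (ρ d, 0, 0, d) = (0, ρ d, ρ d, ρ d) := by
        refine Prod.ext ?_ (Prod.ext ?_ (Prod.ext ?_ ?_)) <;>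
          · simp only [Prod.fst_add, Prod.snd_add]
            first
              | ring1
              | linear_combination two (ρ d)
              | linear_combination two d
      rwa [e] at this
    -- h4 : (0, ρd, 0, 0) ∈ U
    have h4 : ((0, ρ d, 0, 0) : V n × V n × V n × V n) ∈ U := by
      apply bwd
      have e : rhoBar ρ ((0, ρ d, 0, 0) : V n × V n × V n × V n)
          = (0, ρ d, ρ d, ρ d) := by
        simp only [rhoBar, h0]
        refine Prod.ext ?_ (Prod.ext ?_ (Prod.ext ?_ ?_)) <;>
          · simp only
            ring
      rw [e]; exact h3
    -- h5 : (0, ρd, ρd, 0) ∈ U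
    have h5 : ((0, ρ d, ρ d, 0) : V n × V n × V n × V n) ∈ U := by
      apply bwd
      have e : rhoBar ρ ((0, ρ d, ρ d, 0) : V n × V n × V n × V n)
          = (0, ρ d, 0, 0) := by
        simp only [rhoBar, h0]
        refine Prod.ext ?_ (Prod.ext ?_ (Prod.ext ?_ ?_)) <;>
          · simp only
            first
              | ring1
              | linear_combination two (ρ d)
      rw [e]; exact h4
    -- h6 : (0, 0, ρd, 0) ∈ U
    have h6 : ((0, 0, ρ d, 0) : V n × V n × V n × V n) ∈ U := by
      have := U.add_mem h4 h5
      have e : ((0, ρ d, 0, 0) : V n × V n × V n × V n)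
          + (0, ρ d, ρ d, 0) = (0, 0, ρ d, 0) := by
        refine Prod.ext ?_ (Prod.ext ?_ (Prod.ext ?_ ?_)) <;>
          · simp only [Prod.fst_add, Prod.snd_add]
            first
              | ring1
              | linear_combination two (ρ d)
      rwa [e] at this
    -- h7 : (ρd, 0, 0, 0) ∈ U
    have h7 : ((ρ d, 0, 0, 0) : V n × V n × V n × V n) ∈ U := by
      have := U.add_mem hd h2
      have e : ((0, 0, 0, d) : V n × V n × V n × V n)
          + (ρ d, 0, 0, d) = (ρ d, 0, 0, 0) := by
        refine Prod.ext ?_ (Prod.ext ?_ (Prod.ext ?_ ?_)) <;>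
          · simp only [Prod.fst_add, Prod.snd_add]
            first
              | ring1
              | linear_combination two d
      rwa [e] at this
    -- h8 : (ρd, ρd, ρd, ρd) ∈ U
    have h8 : ((ρ d, ρ d, ρ d, ρ d) : V n × V n × V n × V n) ∈ U := by
      have := fwd _ h7
      have e : rhoBar ρ ((ρ d, 0, 0, 0) : V n × V n × V n × V n)
          = (ρ d, ρ d, ρ d, ρ d) := by
        simp only [rhoBar, h0]
        refine Prod.ext ?_ (Prod.ext ?_ (Prod.ext ?_ ?_)) <;>
          · simp only
            ring
      rwa [e] at this
    -- final : (0,0,0,ρd) ∈ U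
    have final := U.add_mem (U.add_mem (U.add_mem h8 h7) h4) h6
    have e : ((ρ d, ρ d, ρ d, ρ d) : V n × V n × V n × V n)
        + (ρ d, 0, 0, 0) + (0, ρ d, 0, 0) + (0, 0, ρ d, 0)
        = (0, 0, 0, ρ d) := by
      refine Prod.ext ?_ (Prod.ext ?_ (Prod.ext ?_ ?_)) <;>
        · simp only [Prod.fst_add, Prod.snd_add]
          first
            | ring1
            | linear_combination two (ρ d)
    rwa [e] at final
  have hfin : D.Finite := Set.toFinite D
  have hcard : D.ncard ≤ (ρ '' D).ncard := by
    rw [Set.ncard_image_of_injective D ρ.injective]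
  exact Set.eq_of_subset_of_ncard_le hsub hcard hfin
end

section
/- Let ρ be a permutation of V = F_2^n with ρ(0)=0 and ρ̄ the induced AES-like key-schedule operator on V⁴. Suppose U ≤ V⁴ is ρ̄-invariant and has the form U = {(a, φ(a)) | a ∈ A} for a subspace A ≤ V² and a linear map φ : A → V² (i.e. the Goursat datum has D = {0}). Then φ(A) = A. -/
/-- The AES-like key-schedule operator, with `V⁴` identified with `V² × V²`. -/
def rhoBar2 {n : ℕ} (ρ : Equiv.Perm (V n)) :
    (V n × V n) × (V n × V n) → (V n × V n) × (V n × V n) :=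
  fun v => ((v.1.1 + ρ v.2.2, v.1.1 + v.1.2 + ρ v.2.2),
            (v.1.1 + v.1.2 + v.2.1 + ρ v.2.2,
             v.1.1 + v.1.2 + v.2.1 + v.2.2 + ρ v.2.2))

theorem graph_invariant_implies_phi_image_eq {n : ℕ}
    (ρ : Equiv.Perm (V n)) (h0 : ρ 0 = 0)
    (A : Submodule (ZMod 2) (V n × V n))
    (φ : A →ₗ[ZMod 2] (V n × V n))
    (hU : rhoBar2 ρ '' {p : (V n × V n) × (V n × V n) | ∃ a : A, p = ((a : V n × V n), φ a)}
        = {p : (V n × V n) × (V n × V n) | ∃ a : A, p = ((a : V n × V n), φ a)}) :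
    Set.range ⇑φ = (A : Set (V n × V n)) := by
  have htwo : (2 : V n) = 0 := by
    funext i
    simp
    decide
  have hsub : (A : Set (V n × V n)) ⊆ Set.range ⇑φ := by
    intro x hx
    set a : A := ⟨x, hx⟩ with ha
    have hu : ((x, (φ a : V n × V n))) ∈
        {p : (V n × V n) × (V n × V n) | ∃ a : A, p = ((a : V n × V n), φ a)} := ⟨a, rfl⟩
    rw [← hU] at hu
    obtain ⟨pb, hpbS, hpb⟩ := hu
    obtain ⟨b, rfl⟩ := hpbS
    have hv : (((b : V n × V n), (φ b : V n × V n))) ∈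
        {p : (V n × V n) × (V n × V n) | ∃ a : A, p = ((a : V n × V n), φ a)} := ⟨b, rfl⟩
    rw [← hU] at hv
    obtain ⟨pc, hpcS, hpc⟩ := hv
    obtain ⟨c, rfl⟩ := hpcS
    simp only [rhoBar2, Prod.ext_iff] at hpb hpc
    obtain ⟨⟨hb1, hb2⟩, hb3, hb4⟩ := hpb
    obtain ⟨⟨hc1, hc2⟩, hc3, hc4⟩ := hpc
    refine ⟨a + c, ?_⟩
    rw [map_add]
    have h1 : (φ a).1 + (φ c).1 = x.1 := by
      linear_combination hb3 - hb1 - hc2 - hc3 +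
        ((φ c).1 + (c : V n × V n).1 + (c : V n × V n).2 + ρ (φ c).2
          - x.1 - (b : V n × V n).2 - (φ b).1 + (φ a).1) * htwo
    have h2 : (φ a).2 + (φ c).2 = x.2 := by
      linear_combination hb4 - hb2 - hc3 - hc4 +
        ((φ c).2 + (c : V n × V n).1 + (c : V n × V n).2 + (φ c).1 + ρ (φ c).2
          - x.2 - (φ b).1 - (φ b).2 + (φ a).2) * htwo
    exact Prod.ext (by simpa using h1) (by simpa using h2)
  have hle : A ≤ LinearMap.range φ := fun x hx => hsub hx
  have hfr : Module.finrank (ZMod 2) (LinearMap.range φ) ≤ Module.finrank (ZMod 2) A :=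
    LinearMap.finrank_range_le φ
  have := Submodule.eq_of_le_of_finrank_le hle hfr
  rw [← LinearMap.coe_range, ← this]
end

section
/- Let ρ ∈ Sym(V) \ AGL(V), where V = F_2^n, and let ρ̄ be the AES-like key-schedule operator on V⁴ induced by ρ. If the group ⟨ρ, T_n⟩ generated by ρ and all translations of V acts primitively on V, then the group ⟨ρ̄, T_{4n}⟩ generated by ρ̄ and all translations of V⁴ acts primitively on V⁴. -/
/-- A partition of `M` is trivial if it is `{M}` or the partition into singletons. -/
def TrivialPartition {M : Type*} (B : Set (Set M)) : Prop :=
  B = {Set.univ} ∨ B = {s : Set M | ∃ x : M, s = {x}}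

/-- A subgroup of `Sym(M)` is primitive if it is transitive and preserves
no nontrivial partition of `M`. -/
def IsPrimitivePermGroup {M : Type*} (G : Subgroup (Equiv.Perm M)) : Prop :=
  (∀ x y : M, ∃ g ∈ G, g x = y) ∧
  ¬ ∃ B : Set (Set M), Setoid.IsPartition B ∧ ¬ TrivialPartition B ∧
      ∀ s ∈ B, ∀ g ∈ G, (⇑g) '' s ∈ B

/-- `ρ` is an affine permutation of `V`. -/
def IsAffinePerm {n : ℕ} (ρ : Equiv.Perm (V n)) : Prop :=
  ∃ (L : V n ≃ₗ[ZMod 2] V n) (c : V n), ∀ x, ρ x = L x + c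

namespace KS

lemma addself {n : ℕ} (x : V n) : x + x = 0 := funext fun _ => CharTwo.add_self_eq_zero _

abbrev M4 (n : ℕ) := V n × V n × V n × V n

lemma addself4 {n : ℕ} (x : M4 n) : x + x = 0 := by
  obtain ⟨a, b, c, d⟩ := x
  simp only [Prod.mk_add_mk, addself]
  rfl

section Cosets
variable {α : Type*} [AddCommGroup α]

def coset (B : Set α) (c : α) : Set α := (· + c) '' B

lemma addd (h2 : ∀ x : α, x + x = 0) (x c : α) : x + c + c = x := by
  rw [add_assoc, h2, add_zero]

lemma mem_coset (h2 : ∀ x : α, x + x = 0) {B : Set α} {c x : α} :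
    x ∈ coset B c ↔ x + c ∈ B := by
  constructor
  · rintro ⟨b, hb, rfl⟩; rwa [addd h2]
  · intro h; exact ⟨x + c, h, addd h2 x c⟩

lemma self_mem_coset (h2 : ∀ x : α, x + x = 0) {B : Set α} (h0 : 0 ∈ B) (c : α) :
    c ∈ coset B c := (mem_coset h2).mpr (by rwa [h2 c])

lemma coset_zero (B : Set α) : coset B 0 = B := by simp [coset]

lemma coset_eq_of_mem (h2 : ∀ x : α, x + x = 0) {B : Set α}
    (hBadd : ∀ a ∈ B, ∀ b ∈ B, a + b ∈ B)
    {a c : α} (h : a ∈ coset B c) : coset B c = coset B a := by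
  rw [mem_coset h2] at h
  ext x
  rw [mem_coset h2, mem_coset h2]
  constructor
  · intro hx
    have e : x + a = (x + c) + (a + c) := by
      have : (x + c) + (a + c) = (x + a) + (c + c) := by abel
      rw [this, h2, add_zero]
    rw [e]; exact hBadd _ hx _ h
  · intro hx
    have e : x + c = (x + a) + (a + c) := by
      have : (x + a) + (a + c) = (x + c) + (a + a) := by abel
      rw [this, h2, add_zero]
    rw [e]; exact hBadd _ hx _ h

lemma isPartition_cosets (h2 : ∀ x : α, x + x = 0) {B : Set α} (h0 : 0 ∈ B)
    (hBadd : ∀ a ∈ B, ∀ b ∈ B, a + b ∈ B) :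
    Setoid.IsPartition {s | ∃ c, s = coset B c} := by
  constructor
  · rintro ⟨c, hc⟩
    exact absurd (hc ▸ self_mem_coset h2 h0 c) (Set.notMem_empty c)
  · intro a
    refine ⟨coset B a, ⟨⟨a, rfl⟩, self_mem_coset h2 h0 a⟩, ?_⟩
    rintro y ⟨⟨c, rfl⟩, hay⟩
    exact coset_eq_of_mem h2 hBadd hay

end Cosets

/-- Core consequence of primitivity: a ρ-compatible subgroup of V is 0 or everything. -/
lemma blockTrivial {n : ℕ} (ρ : Equiv.Perm (V n))
    (hprim : IsPrimitivePermGroup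
      (Subgroup.closure ({ρ} ∪ {g : Equiv.Perm (V n) | ∃ v : V n, g = Equiv.addRight v})))
    (B : Set (V n)) (h0 : (0 : V n) ∈ B)
    (hBadd : ∀ a ∈ B, ∀ b ∈ B, a + b ∈ B)
    (hcomp : ∀ x b : V n, b ∈ B → ρ (b + x) + ρ x ∈ B) :
    B = {0} ∨ B = Set.univ := by
  by_contra hcon
  push_neg at hcon
  obtain ⟨hB1, hB2⟩ := hcon
  set P : Set (Set (V n)) := {s | ∃ c, s = coset B c} with hP
  apply hprim.2
  refine ⟨P, isPartition_cosets addself h0 hBadd, ?_, ?_⟩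
  · -- not trivial
    intro htriv
    have hBP : B ∈ P := ⟨0, (coset_zero B).symm⟩
    rcases htriv with h | h
    · rw [h] at hBP; exact hB2 hBP
    · rw [h] at hBP
      obtain ⟨x, hx⟩ := hBP
      rw [hx] at h0
      rw [Set.mem_singleton_iff] at h0
      exact hB1 (by rw [hx, ← h0])
  · -- invariance
    have himgρ : ∀ c, ⇑ρ '' coset B c = coset B (ρ c) := by
      intro c
      apply Set.eq_of_subset_of_ncard_le
      · rintro y ⟨x, hx, rfl⟩
        rw [mem_coset addself] at hx ⊢
        have e : x = (x + c) + c := (addd addself x c).symm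
        rw [e]
        exact hcomp c (x + c) hx
      · rw [coset, coset, Set.ncard_image_of_injective _ (add_left_injective _),
          Set.ncard_image_of_injective _ ρ.injective,
          Set.ncard_image_of_injective _ (add_left_injective _)]
      · exact Set.toFinite _
    intro s hs g hg
    obtain ⟨c, rfl⟩ := hs
    have key : ∀ (g : Equiv.Perm (V n)), g ∈ Subgroup.closure
        ({ρ} ∪ {g : Equiv.Perm (V n) | ∃ v : V n, g = Equiv.addRight v}) →
        ∀ c, ⇑g '' coset B c = coset B (g c) := by
      intro g hg
      induction hg using Subgroup.closure_induction with
      | mem x hx =>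
        rcases hx with hx | ⟨v, rfl⟩
        · rw [Set.mem_singleton_iff] at hx; subst hx; exact himgρ
        · intro c
          have : ⇑(Equiv.addRight v) '' coset B c = coset B (c + v) := by
            show (· + v) '' ((· + c) '' B) = (· + (c + v)) '' B
            rw [Set.image_image]
            simp only [add_assoc]
          rw [this]
          rfl
      | one => intro c; simp
      | mul x y hx hy ihx ihy =>
        intro c
        rw [Equiv.Perm.coe_mul, Set.image_comp, ihy, ihx]
        rfl
      | inv x hx ih =>
        intro c
        have h := ih (x⁻¹ c)
        rw [show x (x⁻¹ c) = c from Equiv.apply_symm_apply x c] at h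
        rw [← h, ← Set.image_comp]
        simp [Equiv.Perm.inv_def]
    exact ⟨g c, key g hg c⟩

def rhoInv {n : ℕ} (ρ : Equiv.Perm (V n)) : M4 n → M4 n :=
  fun w => (w.1 + ρ (w.2.2.1 + w.2.2.2), w.1 + w.2.1, w.2.1 + w.2.2.1, w.2.2.1 + w.2.2.2)

def rhoBarEquiv {n : ℕ} (ρ : Equiv.Perm (V n)) : Equiv.Perm (M4 n) where
  toFun := rhoBar ρ
  invFun := rhoInv ρ
  left_inv := by
    rintro ⟨a, b, c, d⟩
    simp only [rhoBar, rhoInv]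
    have h34 : a + b + c + ρ d + (a + b + c + d + ρ d) = d := by
      linear_combination addself a + addself b + addself c + addself (ρ d)
    rw [h34]
    simp only [Prod.mk.injEq]
    refine ⟨?_, ?_, ?_, trivial⟩
    · linear_combination addself (ρ d)
    · linear_combination addself a + addself (ρ d)
    · linear_combination addself a + addself b + addself (ρ d)
  right_inv := by
    rintro ⟨a, b, c, d⟩
    simp only [rhoBar, rhoInv, Prod.mk.injEq]
    refine ⟨?_, ?_, ?_, ?_⟩
    · linear_combination addself (ρ (c + d))
    · linear_combination addself a + addself (ρ (c + d))
    · linear_combination addself a + addself b + addself (ρ (c + d))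
    · linear_combination addself a + addself b + addself c + addself (ρ (c + d))

end KS
theorem primitivity_reduction {n : ℕ}
    (ρ : Equiv.Perm (V n)) (hρ : ¬ IsAffinePerm ρ)
    (hprim : IsPrimitivePermGroup
      (Subgroup.closure ({ρ} ∪ {g : Equiv.Perm (V n) | ∃ v : V n, g = Equiv.addRight v}))) :
    IsPrimitivePermGroup
      (Subgroup.closure
        ({g : Equiv.Perm (V n × V n × V n × V n) | ⇑g = rhoBar ρ} ∪
         {g : Equiv.Perm (V n × V n × V n × V n) |
            ∃ v : V n × V n × V n × V n, g = Equiv.addRight v})) := by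
  open KS in
  constructor
  · -- transitivity
    intro x y
    refine ⟨Equiv.addRight (x + y), Subgroup.subset_closure (Or.inr ⟨x + y, rfl⟩), ?_⟩
    show x + (x + y) = y
    rw [← add_assoc, addself4, zero_add]
  · rintro ⟨P, hpart, hnontriv, hinv⟩
    set G := Subgroup.closure
        ({g : Equiv.Perm (V n × V n × V n × V n) | ⇑g = rhoBar ρ} ∪
         {g : Equiv.Perm (V n × V n × V n × V n) |
            ∃ v : V n × V n × V n × V n, g = Equiv.addRight v}) with hG
    have hg0coe : ⇑(rhoBarEquiv ρ) = rhoBar ρ := rfl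
    have hg0mem : rhoBarEquiv ρ ∈ G := Subgroup.subset_closure (Or.inl hg0coe)
    have hg0invmem : (rhoBarEquiv ρ)⁻¹ ∈ G := inv_mem hg0mem
    have hg0invcoe : ⇑((rhoBarEquiv ρ)⁻¹) = rhoInv ρ := by
      rw [Equiv.Perm.inv_def]; rfl
    have htr : ∀ c : M4 n, Equiv.addRight c ∈ G :=
      fun c => Subgroup.subset_closure (Or.inr ⟨c, rfl⟩)
    obtain ⟨S, ⟨hSP, h0S⟩, -⟩ := hpart.2 0
    -- uniqueness of blocks
    have uniq : ∀ T ∈ P, ∀ T' ∈ P, ∀ x : M4 n, x ∈ T → x ∈ T' → T = T' := by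
      intro T hT T' hT' x hxT hxT'
      obtain ⟨U, -, hU⟩ := hpart.2 x
      rw [hU T ⟨hT, hxT⟩, hU T' ⟨hT', hxT'⟩]
    have cosetP : ∀ c : M4 n, coset S c ∈ P := by
      intro c
      have h := hinv S hSP (Equiv.addRight c) (htr c)
      exact h
    -- S is a subgroup
    have hSadd : ∀ a ∈ S, ∀ b ∈ S, a + b ∈ S := by
      intro a ha b hb
      have hc : coset S b = S := uniq _ (cosetP b) _ hSP b (self_mem_coset addself4 h0S b) hb
      rw [← hc, mem_coset addself4, addd addself4]
      exact ha
    -- key property A (forward map on all cosets)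
    have keyA : ∀ (c : M4 n), ∀ u ∈ S, rhoBar ρ (u + c) + rhoBar ρ c ∈ S := by
      intro c u hu
      have h1 : ⇑(rhoBarEquiv ρ) '' coset S c ∈ P := hinv _ (cosetP c) _ hg0mem
      have heq : ⇑(rhoBarEquiv ρ) '' coset S c = coset S (rhoBar ρ c) :=
        uniq _ h1 _ (cosetP _) (rhoBar ρ c)
          ⟨c, self_mem_coset addself4 h0S c, by rw [hg0coe]⟩
          (self_mem_coset addself4 h0S _)
      have hu_c : u + c ∈ coset S c := (mem_coset addself4).mpr (by rwa [addd addself4])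
      have hmem : rhoBar ρ (u + c) ∈ coset S (rhoBar ρ c) :=
        heq ▸ ⟨u + c, hu_c, by rw [hg0coe]⟩
      exact (mem_coset addself4).mp hmem
    -- key property B (inverse map on the block at 0)
    have keyB : ∀ u ∈ S, rhoInv ρ u + rhoInv ρ 0 ∈ S := by
      intro u hu
      have h1 : ⇑((rhoBarEquiv ρ)⁻¹) '' S ∈ P := hinv S hSP _ hg0invmem
      have heq : ⇑((rhoBarEquiv ρ)⁻¹) '' S = coset S (rhoInv ρ 0) :=
        uniq _ h1 _ (cosetP _) (rhoInv ρ 0)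
          ⟨0, h0S, by rw [hg0invcoe]⟩
          (self_mem_coset addself4 h0S _)
      have hmem : rhoInv ρ u ∈ coset S (rhoInv ρ 0) := heq ▸ ⟨u, hu, by rw [hg0invcoe]⟩
      exact (mem_coset addself4).mp hmem
    -- explicit component facts
    have factA : ∀ (x a b c d : V n), (a, b, c, d) ∈ S →
        (a + (ρ (d + x) + ρ x), a + b + (ρ (d + x) + ρ x),
         a + b + c + (ρ (d + x) + ρ x), a + b + c + d + (ρ (d + x) + ρ x)) ∈ S := by
      intro x a b c d h
      have hk := keyA (0, 0, 0, x) _ h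
      have e : rhoBar ρ ((a, b, c, d) + (0, 0, 0, x)) + rhoBar ρ (0, 0, 0, x) =
          ((a + (ρ (d + x) + ρ x), a + b + (ρ (d + x) + ρ x),
           a + b + c + (ρ (d + x) + ρ x), a + b + c + d + (ρ (d + x) + ρ x)) : M4 n) := by
        simp only [rhoBar, Prod.mk_add_mk, Prod.mk.injEq]
        refine ⟨?_, ?_, ?_, ?_⟩
        · linear_combination (addself a - addself a)
        · linear_combination (addself a - addself a)
        · linear_combination (addself a - addself a)
        · linear_combination addself x
      rw [e] at hk
      exact hk
    have factS : ∀ (a b c d : V n), (a, b, c, d) ∈ S →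
        (a + (ρ (c + d) + ρ 0), a + b, b + c, c + d) ∈ S := by
      intro a b c d h
      have hk := keyB _ h
      have e : rhoInv ρ (a, b, c, d) + rhoInv ρ 0 =
          ((a + (ρ (c + d) + ρ 0), a + b, b + c, c + d) : M4 n) := by
        simp only [rhoInv, Prod.fst_zero, Prod.snd_zero, add_zero, zero_add,
          Prod.mk_add_mk, Prod.mk.injEq]
        and_intros <;> first | trivial | ring
      rw [e] at hk
      exact hk
    -- the subgroup W of fourth coordinates
    set W : Set (V n) := {w | ∃ u ∈ S, u.2.2.2 = w} with hWdef
    have hW0 : (0 : V n) ∈ W := ⟨0, h0S, rfl⟩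
    have hWadd : ∀ a ∈ W, ∀ b ∈ W, a + b ∈ W := by
      rintro a ⟨u, hu, rfl⟩ b ⟨u', hu', rfl⟩
      exact ⟨u + u', hSadd _ hu _ hu', rfl⟩
    have w4 : ∀ (a b c d : V n), (a, b, c, d) ∈ S → d ∈ W := by
      intro a b c d h; exact ⟨(a, b, c, d), h, rfl⟩
    have w34 : ∀ (a b c d : V n), (a, b, c, d) ∈ S → c + d ∈ W := by
      intro a b c d h
      exact w4 _ _ _ _ (factS a b c d h)
    have w24 : ∀ (a b c d : V n), (a, b, c, d) ∈ S → b + d ∈ W := by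
      intro a b c d h
      have h2 := w34 _ _ _ _ (factS a b c d h)
      rwa [show b + c + (c + d) = b + d from by linear_combination addself c] at h2
    have wsum : ∀ (a b c d : V n), (a, b, c, d) ∈ S → a + b + c + d ∈ W := by
      intro a b c d h
      have h2 := w24 _ _ _ _ (factS a b c d h)
      rwa [show a + b + (c + d) = a + b + c + d from by ring] at h2
    have w3 : ∀ (a b c d : V n), (a, b, c, d) ∈ S → c ∈ W := by
      intro a b c d h
      have h2 := hWadd _ (w34 a b c d h) _ (w4 a b c d h)
      rwa [show c + d + d = c from by linear_combination addself d] at h2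
    have w2 : ∀ (a b c d : V n), (a, b, c, d) ∈ S → b ∈ W := by
      intro a b c d h
      have h2 := hWadd _ (w24 a b c d h) _ (w4 a b c d h)
      rwa [show b + d + d = b from by linear_combination addself d] at h2
    have w1 : ∀ (a b c d : V n), (a, b, c, d) ∈ S → a ∈ W := by
      intro a b c d h
      have h2 := hWadd _ (hWadd _ (hWadd _ (wsum a b c d h) _ (w2 a b c d h)) _
        (w3 a b c d h)) _ (w4 a b c d h)
      rwa [show a + b + c + d + b + c + d = a from by
        linear_combination addself b + addself c + addself d] at h2
    -- block property of W
    have hWcomp : ∀ (x w : V n), w ∈ W → ρ (w + x) + ρ x ∈ W := by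
      intro x w hw
      obtain ⟨u, hu, hu4⟩ := hw
      obtain ⟨a, b, c, d⟩ := u
      have hd : d = w := hu4
      subst hd
      have hz := factA x a b c d hu
      have h1 := w4 _ _ _ _ hz
      have h2 := wsum a b c d hu
      have h3 := hWadd _ h1 _ h2
      rwa [show a + b + c + d + (ρ (d + x) + ρ x) + (a + b + c + d) = ρ (d + x) + ρ x from by
        linear_combination addself a + addself b + addself c + addself d] at h3
    rcases blockTrivial ρ hprim W hW0 hWadd hWcomp with hW | hW
    · -- W = {0} : S = {0}, partition is the singleton partition
      have hS0 : S = {0} := by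
        ext u
        simp only [Set.mem_singleton_iff]
        constructor
        · intro hu
          obtain ⟨a, b, c, d⟩ := u
          have e1 : a ∈ W := w1 a b c d hu
          have e2 : b ∈ W := w2 a b c d hu
          have e3 : c ∈ W := w3 a b c d hu
          have e4 : d ∈ W := w4 a b c d hu
          rw [hW, Set.mem_singleton_iff] at e1 e2 e3 e4
          rw [e1, e2, e3, e4]; rfl
        · rintro rfl; exact h0S
      have hPsing : P = {s : Set (M4 n) | ∃ x : M4 n, s = {x}} := by
        ext T
        simp only [Set.mem_setOf_eq]
        constructor
        · intro hT
          have hne : T ≠ ∅ := by rintro rfl; exact hpart.1 hT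
          obtain ⟨x, hx⟩ := Set.nonempty_iff_ne_empty.mpr hne
          have hTeq : T = coset S x :=
            uniq T hT _ (cosetP x) x hx (self_mem_coset addself4 h0S x)
          refine ⟨x, ?_⟩
          rw [hTeq, hS0]
          show (· + x) '' {0} = {x}
          rw [Set.image_singleton, zero_add]
        · rintro ⟨x, rfl⟩
          have : coset S x = {x} := by
            rw [hS0]
            show (· + x) '' {0} = {x}
            rw [Set.image_singleton, zero_add]
          rw [← this]
          exact cosetP x
      exact hnontriv (Or.inr hPsing)
    · -- W = univ
      set D : Set (V n) := {d | ((d, d, d, d) : M4 n) ∈ S} with hDdef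
      have hD0 : (0 : V n) ∈ D := h0S
      have hDadd : ∀ a ∈ D, ∀ b ∈ D, a + b ∈ D := by
        intro a ha b hb
        have h := hSadd _ ha _ hb
        show ((a + b, a + b, a + b, a + b) : M4 n) ∈ S
        rwa [show ((a, a, a, a) : M4 n) + (b, b, b, b) = (a + b, a + b, a + b, a + b) from by
          simp only [Prod.mk_add_mk]] at h
      have Dquad : ∀ (w x x' : V n),
          ρ (w + x) + ρ x + (ρ (w + x') + ρ x') ∈ D := by
        intro w x x'
        have hwW : w ∈ W := by rw [hW]; trivial
        obtain ⟨u, hu, hu4⟩ := hwW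
        obtain ⟨a, b, c, d⟩ := u
        have hd : d = w := hu4
        subst hd
        have h1 := factA x a b c d hu
        have h2 := factA x' a b c d hu
        have h := hSadd _ h1 _ h2
        show ((ρ (d + x) + ρ x + (ρ (d + x') + ρ x'), ρ (d + x) + ρ x + (ρ (d + x') + ρ x'),
          ρ (d + x) + ρ x + (ρ (d + x') + ρ x'), ρ (d + x) + ρ x + (ρ (d + x') + ρ x')) : M4 n) ∈ S
        rwa [show ((a + (ρ (d + x) + ρ x), a + b + (ρ (d + x) + ρ x),
             a + b + c + (ρ (d + x) + ρ x), a + b + c + d + (ρ (d + x) + ρ x)) : M4 n) +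
            (a + (ρ (d + x') + ρ x'), a + b + (ρ (d + x') + ρ x'),
             a + b + c + (ρ (d + x') + ρ x'), a + b + c + d + (ρ (d + x') + ρ x')) =
            (ρ (d + x) + ρ x + (ρ (d + x') + ρ x'), ρ (d + x) + ρ x + (ρ (d + x') + ρ x'),
             ρ (d + x) + ρ x + (ρ (d + x') + ρ x'),
             ρ (d + x) + ρ x + (ρ (d + x') + ρ x')) from by
          simp only [Prod.mk_add_mk, Prod.mk.injEq]
          refine ⟨?_, ?_, ?_, ?_⟩
          · linear_combination addself a
          · linear_combination addself a + addself b
          · linear_combination addself a + addself b + addself c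
          · linear_combination addself a + addself b + addself c + addself d] at h
      -- sigma orbit of the diagonal
      have hA1 : ∀ d ∈ D, ((d, 0, 0, 0) : M4 n) ∈ S := by
        intro d hd
        have h := factS d d d d hd
        rwa [show ((d + (ρ (d + d) + ρ 0), d + d, d + d, d + d) : M4 n) = (d, 0, 0, 0) from by
          simp [addself]] at h
      have hA2 : ∀ d ∈ D, ((d, d, 0, 0) : M4 n) ∈ S := by
        intro d hd
        have h := factS d 0 0 0 (hA1 d hd)
        rwa [show ((d + (ρ (0 + 0) + ρ 0), d + 0, 0 + 0, 0 + 0) : M4 n) = (d, d, 0, 0) from by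
          simp [addself]] at h
      have hA3 : ∀ d ∈ D, ((d, 0, d, 0) : M4 n) ∈ S := by
        intro d hd
        have h := factS d d 0 0 (hA2 d hd)
        rwa [show ((d + (ρ (0 + 0) + ρ 0), d + d, d + 0, 0 + 0) : M4 n) = (d, 0, d, 0) from by
          simp [addself]] at h
      have fD : ∀ d ∈ D, ρ d + ρ 0 ∈ D := by
        intro d hd
        have h4 := factS d 0 d 0 (hA3 d hd)
        have h5 := hSadd _ h4 _ hd
        rw [show ((d + (ρ (d + 0) + ρ 0), d + 0, 0 + d, d + 0) : M4 n) + (d, d, d, d) =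
            (ρ d + ρ 0, 0, 0, 0) from by
          simp only [add_zero, zero_add, Prod.mk_add_mk, Prod.mk.injEq]
          exact ⟨by linear_combination addself d, addself d, addself d, addself d⟩] at h5
        have h6 := factA 0 (ρ d + ρ 0) 0 0 0 h5
        show ((ρ d + ρ 0, ρ d + ρ 0, ρ d + ρ 0, ρ d + ρ 0) : M4 n) ∈ S
        rwa [show ((ρ d + ρ 0 + (ρ (0 + 0) + ρ 0), ρ d + ρ 0 + 0 + (ρ (0 + 0) + ρ 0),
            ρ d + ρ 0 + 0 + 0 + (ρ (0 + 0) + ρ 0),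
            ρ d + ρ 0 + 0 + 0 + 0 + (ρ (0 + 0) + ρ 0)) : M4 n) =
            (ρ d + ρ 0, ρ d + ρ 0, ρ d + ρ 0, ρ d + ρ 0) from by
          simp [addself]] at h6
      have hDcomp : ∀ (x d : V n), d ∈ D → ρ (d + x) + ρ x ∈ D := by
        intro x d hd
        have h1 := Dquad d x 0
        rw [add_zero] at h1
        have h2 := hDadd _ h1 _ (fD d hd)
        rwa [show ρ (d + x) + ρ x + (ρ d + ρ 0) + (ρ d + ρ 0) = ρ (d + x) + ρ x from by
          linear_combination addself (ρ d) + addself (ρ 0)] at h2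
      have hDne : D ≠ {0} := by
        intro hD
        apply hρ
        have haff : ∀ w x : V n, ρ (w + x) + ρ x + (ρ (w + 0) + ρ 0) = 0 := by
          intro w x
          have h := Dquad w x 0
          rw [hD, Set.mem_singleton_iff] at h
          exact h
        have haff' : ∀ w x : V n, ρ (w + x) + ρ x + (ρ w + ρ 0) = 0 := by
          intro w x
          have h := haff w x
          rwa [add_zero] at h
        set L : V n → V n := fun x => ρ x + ρ 0 with hL
        have hLadd : ∀ w x, L (w + x) = L w + L x := by
          intro w x
          show ρ (w + x) + ρ 0 = (ρ w + ρ 0) + (ρ x + ρ 0)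
          linear_combination haff' w x - addself (ρ w) - addself (ρ x) - addself (ρ 0)
        have hLbij : Function.Bijective L := by
          constructor
          · intro x y hxy
            have hxy' : ρ x + ρ 0 = ρ y + ρ 0 := hxy
            have : ρ x = ρ y := by linear_combination hxy'
            exact ρ.injective this
          · intro y
            refine ⟨ρ.symm (y + ρ 0), ?_⟩
            show ρ (ρ.symm (y + ρ 0)) + ρ 0 = y
            rw [Equiv.apply_symm_apply]
            linear_combination addself (ρ 0)
        have hsmul : ∀ (m : ZMod 2) (x : V n), L (m • x) = m • L x := by
          intro m x
          have hL0 : L 0 = 0 := by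
            show ρ 0 + ρ 0 = 0
            exact addself (ρ 0)
          have hm : m = 0 ∨ m = 1 := by revert m; decide
          rcases hm with rfl | rfl
          · simp [hL0]
          · simp
        refine ⟨LinearEquiv.ofBijective
          { toFun := L, map_add' := hLadd, map_smul' := hsmul } hLbij, ρ 0, ?_⟩
        intro x
        show ρ x = L x + ρ 0
        show ρ x = (ρ x + ρ 0) + ρ 0
        linear_combination - addself (ρ 0)
      rcases blockTrivial ρ hprim D hD0 hDadd hDcomp with hD | hD
      · exact absurd hD hDne
      · -- D = univ, hence S = univ
        have hmemD : ∀ a : V n, a ∈ D := fun a => by rw [hD]; trivial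
        have hSuniv : S = Set.univ := by
          ext v
          simp only [Set.mem_univ, iff_true]
          obtain ⟨p, q, r, s⟩ := v
          have e1 := hA1 _ (hmemD (p + q + r + s))
          have e2 := hA2 _ (hmemD (q + s))
          have e3 := hA3 _ (hmemD (r + s))
          have e4 : ((s, s, s, s) : M4 n) ∈ S := hmemD s
          have h := hSadd _ (hSadd _ (hSadd _ e1 _ e2) _ e3) _ e4
          rwa [show ((((p + q + r + s, 0, 0, 0) : M4 n) + (q + s, q + s, 0, 0)) +
              (r + s, 0, r + s, 0)) + (s, s, s, s) = ((p, q, r, s) : M4 n) from by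
            simp only [Prod.mk_add_mk, Prod.mk.injEq]
            refine ⟨?_, ?_, ?_, ?_⟩
            · linear_combination addself q + addself r + addself s + addself s
            · linear_combination addself s
            · linear_combination addself s
            · linear_combination addself s - addself s] at h
        have hPuniv : P = {Set.univ} := by
          ext T
          simp only [Set.mem_singleton_iff]
          constructor
          · intro hT
            have hne : T ≠ ∅ := by rintro rfl; exact hpart.1 hT
            obtain ⟨x, hx⟩ := Set.nonempty_iff_ne_empty.mpr hne
            exact uniq T hT Set.univ (hSuniv ▸ hSP) x hx (Set.mem_univ x)
          · rintro rfl
            exact hSuniv ▸ hSP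
        exact hnontriv (Or.inl hPuniv)
end

section
/- Let ρ be a permutation of V = F_2^n with ρ(0)=0 and ρ̄ the induced key-schedule operator on V⁴. If U ≤ V⁴ is ρ̄-invariant and for all b₁, b₂ ∈ V with (b₁,b₂,0,0) ∈ U, then b₁ = b₂ = 0, provided additionally that the only element of U of the form (0,0,x,y) is (0,0,0,0). -/
theorem first_two_coords_vanish {n : ℕ} (ρ : Equiv.Perm (V n)) (h0 : ρ 0 = 0)
    (U : Submodule (ZMod 2) (V n × V n × V n × V n))
    (hU : rhoBar ρ '' (U : Set (V n × V n × V n × V n)) = U)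
    (htail : ∀ x y : V n, ((0 : V n), (0 : V n), x, y) ∈ U → x = 0 ∧ y = 0) :
    ∀ b₁ b₂ : V n, (b₁, b₂, (0 : V n), (0 : V n)) ∈ U → b₁ = 0 ∧ b₂ = 0 := by
  intro b₁ b₂ hb
  have htwo : (2 : ZMod 2) = 0 := rfl
  -- forward image
  have hfwd : rhoBar ρ (b₁, b₂, 0, 0) ∈ U := by
    have : rhoBar ρ (b₁, b₂, 0, 0) ∈ rhoBar ρ '' (U : Set (V n × V n × V n × V n)) :=
      ⟨_, hb, rfl⟩
    rwa [hU] at this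
  -- backward: the element is itself an image
  have hbwd : (b₁, b₂, (0:V n), (0:V n)) ∈ rhoBar ρ '' (U : Set (V n × V n × V n × V n)) := by
    rw [hU]; exact hb
  obtain ⟨⟨a, b, c, d⟩, hu, heq⟩ := hbwd
  simp only [rhoBar, Prod.mk.injEq] at heq
  obtain ⟨h1, h2, h3, h4⟩ := heq
  have hd : d = 0 := by
    funext i
    have e3 := congrFun h3 i
    have e4 := congrFun h4 i
    simp only [Pi.add_apply, Pi.zero_apply] at e3 e4 ⊢
    linear_combination e4 - e3
  subst hd
  rw [h0] at h1 h2 h3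
  simp only [add_zero] at h1 h2 h3
  have key : ((0:V n), (0:V n), b₁, b₁ + b₂) ∈ U := by
    have hsum := U.add_mem hu hfwd
    have heq2 : ((a, b, c, (0:V n)) : V n × V n × V n × V n) + rhoBar ρ (b₁, b₂, 0, 0)
        = ((0:V n), (0:V n), b₁, b₁ + b₂) := by
      simp only [rhoBar, h0, add_zero, Prod.mk_add_mk, Prod.mk.injEq]
      refine ⟨?_, ?_, ?_, ?_⟩ <;> funext i
      · have e1 := congrFun h1 i
        simp only [Pi.add_apply, Pi.zero_apply] at e1 ⊢
        linear_combination e1 + b₁ i * htwo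
      · have e1 := congrFun h1 i
        have e2 := congrFun h2 i
        simp only [Pi.add_apply, Pi.zero_apply] at e1 e2 ⊢
        linear_combination e2 - e1 + b₂ i * htwo
      · have e2 := congrFun h2 i
        have e3 := congrFun h3 i
        simp only [Pi.add_apply, Pi.zero_apply] at e2 e3 ⊢
        linear_combination e3 - e2
      · simp [Pi.add_apply]
    rwa [heq2] at hsum
  obtain ⟨hb1, hb12⟩ := htail _ _ key
  refine ⟨hb1, ?_⟩
  simpa [hb1] using hb12
end

section
/- The inversion map on F_{2^8} extended by 0 ↦ 0 (i.e. the map γ : x ↦ x^{254} in F_{2^8}) is 4-differentially uniform: for every nonzero a and every b in F_{2^8}, the equation γ(x) + γ(x+a) = b has at most 4 solutions. -/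
open Polynomial

noncomputable instance : Fintype (GaloisField 2 8) := Fintype.ofFinite _
noncomputable instance : DecidableEq (GaloisField 2 8) := Classical.decEq _

lemma gf_pow254_eq_inv (x : GaloisField 2 8) : x ^ 254 = x⁻¹ := by
  rcases eq_or_ne x 0 with rfl | hx
  · simp
  · have hcard : Fintype.card (GaloisField 2 8) = 256 := by
      rw [← Nat.card_eq_fintype_card, GaloisField.card 2 8 (by norm_num)]
      norm_num
    have h := FiniteField.pow_card_sub_one_eq_one x hx
    rw [hcard] at h
    norm_num at h
    field_simp
    calc x ^ 255 = x ^ 255 := by ring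
    _ = 1 := h

lemma gf_char2 (y : GaloisField 2 8) : y + y = 0 := by
  have : (2 : GaloisField 2 8) = 0 := by
    exact_mod_cast CharP.cast_eq_zero (GaloisField 2 8) 2
  calc y + y = 2 * y := by ring
  _ = 0 := by rw [this, zero_mul]

theorem inversion_four_diff_uniform
    (a : GaloisField 2 8) (ha : a ≠ 0) (b : GaloisField 2 8) :
    Nat.card {x : GaloisField 2 8 | x ^ 254 + (x + a) ^ 254 = b} ≤ 4 := by
  have hset : {x : GaloisField 2 8 | x ^ 254 + (x + a) ^ 254 = b}
      = {x : GaloisField 2 8 | x⁻¹ + (x + a)⁻¹ = b} := by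
    ext x; simp [gf_pow254_eq_inv]
  rw [Nat.card_coe_set_eq, hset]
  have hadd : ∀ x : GaloisField 2 8, x ≠ a → x + a ≠ 0 := by
    intro x hxa h
    apply hxa
    have := gf_char2 a
    calc x = x + (a + a) := by rw [gf_char2 a]; ring
    _ = (x + a) + a := by ring
    _ = a := by rw [h, zero_add]
  rcases eq_or_ne b 0 with rfl | hb
  · -- b = 0 : at most 2 solutions
    have hsub : {x : GaloisField 2 8 | x⁻¹ + (x + a)⁻¹ = 0} ⊆ ↑({0, a} : Finset (GaloisField 2 8)) := by
      intro x hx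
      simp only [Set.mem_setOf_eq] at hx
      simp only [Finset.coe_insert, Finset.coe_singleton, Set.mem_insert_iff, Set.mem_singleton_iff]
      by_contra h
      push_neg at h
      obtain ⟨hx0, hxa⟩ := h
      have hxa0 := hadd x hxa
      have hinv : x⁻¹ = (x + a)⁻¹ := by
        have := gf_char2 (x + a)⁻¹
        calc x⁻¹ = x⁻¹ + ((x + a)⁻¹ + (x + a)⁻¹) := by rw [this]; ring
        _ = (x⁻¹ + (x + a)⁻¹) + (x + a)⁻¹ := by ring
        _ = (x + a)⁻¹ := by rw [hx, zero_add]
      have : x = x + a := by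
        have := congrArg (·⁻¹) hinv
        simpa using this
      exact ha (by linear_combination -this)
    calc ({x : GaloisField 2 8 | x⁻¹ + (x + a)⁻¹ = 0}).ncard
        ≤ ({0, a} : Finset (GaloisField 2 8)).card := by
          rw [← Set.ncard_coe_finset]
          exact Set.ncard_le_ncard hsub (Set.toFinite _)
    _ ≤ 2 := Finset.card_le_two
    _ ≤ 4 := by norm_num
  · -- b ≠ 0 : quadratic
    set P : Polynomial (GaloisField 2 8) := C b * X ^ 2 + C (a * b) * X + C a with hP
    have hPne : P ≠ 0 := by
      intro h
      have hd : P.natDegree = 2 := Polynomial.natDegree_quadratic hb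
      rw [h] at hd
      simp at hd
    have hsub : {x : GaloisField 2 8 | x⁻¹ + (x + a)⁻¹ = b}
        ⊆ ↑(({0, a} : Finset (GaloisField 2 8)) ∪ P.roots.toFinset) := by
      intro x hx
      simp only [Set.mem_setOf_eq] at hx
      simp only [Finset.coe_union, Finset.coe_insert, Finset.coe_singleton,
        Set.mem_union, Set.mem_insert_iff, Set.mem_singleton_iff, Finset.mem_coe, Multiset.mem_toFinset]
      by_cases hx0 : x = 0
      · exact Or.inl (Or.inl hx0)
      by_cases hxa : x = a
      · exact Or.inl (Or.inr hxa)
      right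
      have hxa0 := hadd x hxa
      rw [mem_roots hPne]
      show P.eval x = 0
      have h2 : (2 : GaloisField 2 8) = 0 := by
        exact_mod_cast CharP.cast_eq_zero (GaloisField 2 8) 2
      have hmul : (x⁻¹ + (x + a)⁻¹) * (x * (x + a)) = b * (x * (x + a)) := by rw [hx]
      have hlhs : (x⁻¹ + (x + a)⁻¹) * (x * (x + a)) = a := by
        field_simp
        linear_combination (x + a) * gf_char2 x + (x - x*a - x^2) * h2
      have key : b * (x * (x + a)) = a := by rw [← hmul, hlhs]
      simp only [hP, eval_add, eval_mul, eval_C, eval_X, eval_pow]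
      linear_combination key + x * b * gf_char2 x + gf_char2 a - (b*x^2) * h2
    calc ({x : GaloisField 2 8 | x⁻¹ + (x + a)⁻¹ = b}).ncard
        ≤ (({0, a} : Finset (GaloisField 2 8)) ∪ P.roots.toFinset).card := by
          rw [← Set.ncard_coe_finset]
          exact Set.ncard_le_ncard hsub (Set.toFinite _)
    _ ≤ ({0, a} : Finset (GaloisField 2 8)).card + P.roots.toFinset.card :=
          Finset.card_union_le _ _
    _ ≤ 2 + 2 := by
          gcongr
          · exact Finset.card_le_two
          · calc P.roots.toFinset.card ≤ Multiset.card P.roots := Multiset.toFinset_card_le _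
            _ ≤ P.natDegree := Polynomial.card_roots' P
            _ = 2 := Polynomial.natDegree_quadratic hb
    _ = 4 := rfl
end

section
/- Let ρ be a permutation of V = F_2^n with ρ(0) = 0 and ρ̄ the induced AES-like key-schedule operator on V⁴. If there is no nontrivial proper F_2-subspace W ≤ V with ρ(W) = W and ρ is not affine, then every ρ̄-invariant F_2-subspace U ≤ V⁴ satisfying additionally that U is a block for all translations (i.e. ρ̄ permutes the cosets of U) is trivial: U = {0} or U = V⁴. -/
private lemma addSelf {M : Type*} [AddCommGroup M] [Module (ZMod 2) M] (a : M) : a + a = 0 := by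
  have h : (2 : ZMod 2) • a = 0 := by
    have h2 : (2 : ZMod 2) = 0 := by decide
    rw [h2, zero_smul]
  simpa [two_smul] using h

private lemma twoMul {M : Type*} [Ring M] [Module (ZMod 2) M] (a : M) : 2 * a = 0 := by
  rw [two_mul]; exact addSelf a

private lemma nsmulTwo {M : Type*} [AddCommGroup M] [Module (ZMod 2) M] (a : M) :
    (2 : ℕ) • a = 0 := by
  rw [two_nsmul]; exact addSelf a

private lemma zsmulTwo {M : Type*} [AddCommGroup M] [Module (ZMod 2) M] (a : M) :
    (2 : ℤ) • a = 0 := by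
  rw [two_zsmul]; exact addSelf a

private lemma eq_of_add3 {M : Type*} [AddCommGroup M] [Module (ZMod 2) M] {A B C : M}
    (h : A + B + C = 0) : A = B + C := by
  have h' : A + B + C + (B + C) = B + C := by rw [h, zero_add]
  calc A = A + B + C + (B + C) := by abel_nf; simp [nsmulTwo, zsmulTwo]
  _ = B + C := h'

/-- diagonal embedding as a linear map -/
private def dgL (n : ℕ) : V n →ₗ[ZMod 2] V n × V n × V n × V n where
  toFun t := (t, t, t, t)
  map_add' _ _ := rfl
  map_smul' _ _ := rfl

/-- fourth projection as a linear map -/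
private def p4L (n : ℕ) : (V n × V n × V n × V n) →ₗ[ZMod 2] V n where
  toFun v := v.2.2.2
  map_add' _ _ := rfl
  map_smul' _ _ := rfl

theorem invariant_linear_block_trivial {n : ℕ}
    (ρ : Equiv.Perm (V n)) (h0 : ρ 0 = 0)
    (hW : ¬ ∃ W : Submodule (ZMod 2) (V n), W ≠ ⊥ ∧ W ≠ ⊤ ∧
      (⇑ρ) '' (W : Set (V n)) = W)
    (hna : ¬ IsAffinePerm ρ)
    (U : Submodule (ZMod 2) (V n × V n × V n × V n))
    (hU : rhoBar ρ '' (U : Set (V n × V n × V n × V n)) = U)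
    (hblock : ∀ v : V n × V n × V n × V n, ∃ w : V n × V n × V n × V n,
      rhoBar ρ '' ((fun x => x + v) '' (U : Set (V n × V n × V n × V n)))
        = (fun x => x + w) '' (U : Set (V n × V n × V n × V n))) :
    U = ⊥ ∨ U = ⊤ := by
  classical
  -- (P) : the fundamental relation coming from the block property
  have hF1 : ∀ u ∈ U, ∀ v, rhoBar ρ (u + v) + rhoBar ρ v ∈ U := by
    intro u hu v
    obtain ⟨w, hw⟩ := hblock v
    have h1 : rhoBar ρ (u + v) ∈ (fun x => x + w) '' (U : Set _) := by
      rw [← hw]; exact ⟨u + v, ⟨u, hu, rfl⟩, rfl⟩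
    have h2 : rhoBar ρ v ∈ (fun x => x + w) '' (U : Set _) := by
      rw [← hw]; exact ⟨0 + v, ⟨0, U.zero_mem, rfl⟩, by rw [zero_add]⟩
    obtain ⟨c₁, hc₁, e₁⟩ := h1
    obtain ⟨c₂, hc₂, e₂⟩ := h2
    have e : rhoBar ρ (u + v) + rhoBar ρ v = c₁ + c₂ := by
      rw [← e₁, ← e₂, add_add_add_comm, addSelf w, add_zero]
    rw [e]; exact U.add_mem hc₁ hc₂
  have hR0 : rhoBar ρ 0 = 0 := by
    simp [rhoBar, h0, Prod.ext_iff]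
  have hF2 : ∀ u ∈ U, rhoBar ρ u ∈ U := by
    intro u hu
    have := hF1 u hu 0
    simpa [hR0] using this
  -- injectivity of rhoBar
  have hB4 : ∀ v : V n × V n × V n × V n,
      v.2.2.2 = (rhoBar ρ v).2.2.1 + (rhoBar ρ v).2.2.2 := by
    intro v; simp only [rhoBar]; abel_nf; simp [twoMul, nsmulTwo, zsmulTwo]
  have hB3 : ∀ v : V n × V n × V n × V n,
      v.2.2.1 = (rhoBar ρ v).2.1 + (rhoBar ρ v).2.2.1 := by
    intro v; simp only [rhoBar]; abel_nf; simp [twoMul, nsmulTwo, zsmulTwo]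
  have hB2 : ∀ v : V n × V n × V n × V n,
      v.2.1 = (rhoBar ρ v).1 + (rhoBar ρ v).2.1 := by
    intro v; simp only [rhoBar]; abel_nf; simp [twoMul, nsmulTwo, zsmulTwo]
  have hB1 : ∀ v : V n × V n × V n × V n,
      v.1 = (rhoBar ρ v).1 + ρ v.2.2.2 := by
    intro v; simp only [rhoBar]; abel_nf; simp [twoMul, nsmulTwo, zsmulTwo]
  have hRinj : Function.Injective (rhoBar ρ) := by
    intro a b hab
    have e4 : a.2.2.2 = b.2.2.2 := by rw [hB4 a, hB4 b, hab]
    have e3 : a.2.2.1 = b.2.2.1 := by rw [hB3 a, hB3 b, hab]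
    have e2 : a.2.1 = b.2.1 := by rw [hB2 a, hB2 b, hab]
    have e1 : a.1 = b.1 := by rw [hB1 a, hB1 b, hab, e4]
    exact Prod.ext_iff.mpr ⟨e1, Prod.ext_iff.mpr ⟨e2, Prod.ext_iff.mpr ⟨e3, e4⟩⟩⟩
  -- the image equality
  have himg : rhoBar ρ '' (U : Set _) = U := by
    have hsub : rhoBar ρ '' (U : Set _) ⊆ (U : Set _) := by
      rintro _ ⟨u, hu, rfl⟩; exact hF2 u hu
    exact Set.eq_of_subset_of_ncard_le hsub
      (le_of_eq (Set.ncard_image_of_injective _ hRinj).symm)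
  have hback : ∀ v, rhoBar ρ v ∈ U → v ∈ U := by
    intro v hv
    have hv' : rhoBar ρ v ∈ rhoBar ρ '' (U : Set _) := by rw [himg]; exact hv
    obtain ⟨u, hu, he⟩ := hv'
    rwa [← hRinj he]
  have hsurj : ∀ u ∈ U, ∃ w ∈ U, rhoBar ρ w = u := by
    intro u hu
    have hu' : u ∈ rhoBar ρ '' (U : Set _) := by rw [himg]; exact hu
    obtain ⟨w, hw, he⟩ := hu'
    exact ⟨w, hw, he⟩
  -- the diagonal submodule
  set T : Submodule (ZMod 2) (V n) := U.comap (dgL n) with hTdef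
  have hTmem : ∀ t : V n, t ∈ T ↔ ((t, t, t, t) : V n × V n × V n × V n) ∈ U := by
    intro t; exact Iff.rfl
  -- the chain lemma
  have chain : ∀ t : V n, ((t, t, t, t) : V n × V n × V n × V n) ∈ U →
      ((t, 0, 0, 0) : V n × V n × V n × V n) ∈ U ∧
      ((0, t, 0, 0) : V n × V n × V n × V n) ∈ U ∧
      ((0, 0, t, 0) : V n × V n × V n × V n) ∈ U ∧
      ((0, 0, 0, t) : V n × V n × V n × V n) ∈ U ∧
      ((ρ t, ρ t, ρ t, ρ t) : V n × V n × V n × V n) ∈ U := by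
    intro t hdg
    have h1 : ((t, 0, 0, 0) : V n × V n × V n × V n) ∈ U := by
      apply hback
      have e : rhoBar ρ ((t, 0, 0, 0) : V n × V n × V n × V n) = (t, t, t, t) := by
        simp [rhoBar, h0, Prod.ext_iff]
      rw [e]; exact hdg
    have h2 : ((0, t, 0, 0) : V n × V n × V n × V n) ∈ U := by
      apply hback
      have e : rhoBar ρ ((0, t, 0, 0) : V n × V n × V n × V n)
          = ((t, t, t, t) : V n × V n × V n × V n) + (t, 0, 0, 0) := by
        simp [rhoBar, h0, Prod.ext_iff, addSelf]
      rw [e]; exact U.add_mem hdg h1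
    have h3 : ((0, 0, t, 0) : V n × V n × V n × V n) ∈ U := by
      apply hback
      have e : rhoBar ρ ((0, 0, t, 0) : V n × V n × V n × V n)
          = ((t, t, t, t) : V n × V n × V n × V n) + ((t, 0, 0, 0) + (0, t, 0, 0)) := by
        simp [rhoBar, h0, Prod.ext_iff, addSelf]
      rw [e]; exact U.add_mem hdg (U.add_mem h1 h2)
    have h4 : ((0, 0, 0, t) : V n × V n × V n × V n) ∈ U := by
      have e : ((0, 0, 0, t) : V n × V n × V n × V n)
          = ((t, t, t, t) : V n × V n × V n × V n) + ((t, 0, 0, 0) + ((0, t, 0, 0) + (0, 0, t, 0))) := by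
        simp [Prod.ext_iff, addSelf]
      rw [e]; exact U.add_mem hdg (U.add_mem h1 (U.add_mem h2 h3))
    have h5 : ((ρ t, ρ t, ρ t, ρ t) : V n × V n × V n × V n) ∈ U := by
      have m := hF2 _ h4
      have e : ((ρ t, ρ t, ρ t, ρ t) : V n × V n × V n × V n)
          = rhoBar ρ ((0, 0, 0, t) : V n × V n × V n × V n) + (0, 0, 0, t) := by
        refine Prod.ext_iff.mpr ⟨?_, Prod.ext_iff.mpr ⟨?_, Prod.ext_iff.mpr ⟨?_, ?_⟩⟩⟩ <;>
          simp [rhoBar] <;> abel_nf <;> simp [twoMul, nsmulTwo, zsmulTwo]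
      rw [e]; exact U.add_mem m h4
    exact ⟨h1, h2, h3, h4, h5⟩
  -- T is rho-invariant
  have hTimg : (⇑ρ) '' (T : Set (V n)) = T := by
    have hsub : (⇑ρ) '' (T : Set (V n)) ⊆ (T : Set (V n)) := by
      rintro _ ⟨t, ht, rfl⟩
      have := (chain t ((hTmem t).mp ht)).2.2.2.2
      exact (hTmem (ρ t)).mpr this
    exact Set.eq_of_subset_of_ncard_le hsub
      (le_of_eq (Set.ncard_image_of_injective _ ρ.injective).symm)
  by_cases hTtop : T = ⊤
  · -- U = ⊤
    right
    rw [Submodule.eq_top_iff']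
    intro v
    have hmem : ∀ t : V n, ((t, t, t, t) : V n × V n × V n × V n) ∈ U := by
      intro t
      have : t ∈ T := by rw [hTtop]; trivial
      exact (hTmem t).mp this
    obtain ⟨m1, -, -, -, -⟩ := chain v.1 (hmem v.1)
    obtain ⟨-, m2, -, -, -⟩ := chain v.2.1 (hmem v.2.1)
    obtain ⟨-, -, m3, -, -⟩ := chain v.2.2.1 (hmem v.2.2.1)
    obtain ⟨-, -, -, m4, -⟩ := chain v.2.2.2 (hmem v.2.2.2)
    have e : v = ((v.1, 0, 0, 0) : V n × V n × V n × V n)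
        + ((0, v.2.1, 0, 0) + ((0, 0, v.2.2.1, 0) + (0, 0, 0, v.2.2.2))) := by
      simp [Prod.ext_iff]
    rw [e]; exact U.add_mem m1 (U.add_mem m2 (U.add_mem m3 m4))
  by_cases hTbot : T = ⊥
  · -- main case : T = ⊥
    set W : Submodule (ZMod 2) (V n) := U.map (p4L n) with hWdef
    have S4 : ∀ u ∈ U, u.2.2.2 ∈ W := fun u hu => ⟨u, hu, rfl⟩
    have S3 : ∀ u ∈ U, u.2.2.1 ∈ W := by
      intro u hu
      obtain ⟨w, hw, rfl⟩ := hsurj u hu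
      have e : (rhoBar ρ w).2.2.1 = (rhoBar ρ w).2.2.2 + w.2.2.2 := by
        simp only [rhoBar]; abel_nf; simp [twoMul, nsmulTwo, zsmulTwo]
      rw [e]
      exact W.add_mem (S4 _ (hF2 w hw)) (S4 w hw)
    have S2 : ∀ u ∈ U, u.2.1 ∈ W := by
      intro u hu
      obtain ⟨w, hw, rfl⟩ := hsurj u hu
      have e : (rhoBar ρ w).2.1 = (rhoBar ρ w).2.2.1 + w.2.2.1 := by
        simp only [rhoBar]; abel_nf; simp [twoMul, nsmulTwo, zsmulTwo]
      rw [e]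
      exact W.add_mem (S3 _ (hF2 w hw)) (S3 w hw)
    have S1 : ∀ u ∈ U, u.1 ∈ W := by
      intro u hu
      obtain ⟨w, hw, rfl⟩ := hsurj u hu
      have e : (rhoBar ρ w).1 = (rhoBar ρ w).2.1 + w.2.1 := by
        simp only [rhoBar]; abel_nf; simp [twoMul, nsmulTwo, zsmulTwo]
      rw [e]
      exact W.add_mem (S2 _ (hF2 w hw)) (S2 w hw)
    have hWimg : (⇑ρ) '' (W : Set (V n)) = W := by
      have hsub : (⇑ρ) '' (W : Set (V n)) ⊆ (W : Set (V n)) := by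
        rintro _ ⟨a, ⟨u, hu, rfl⟩, rfl⟩
        have e : ρ ((p4L n) u) = (rhoBar ρ u).1 + u.1 := by
          show ρ u.2.2.2 = _
          simp only [rhoBar]; abel_nf; simp [twoMul, nsmulTwo, zsmulTwo]
        rw [e]
        exact W.add_mem (S1 _ (hF2 u hu)) (S1 u hu)
      exact Set.eq_of_subset_of_ncard_le hsub
        (le_of_eq (Set.ncard_image_of_injective _ ρ.injective).symm)
    by_cases hWbot : W = ⊥
    · -- U = ⊥
      left
      rw [Submodule.eq_bot_iff]
      intro u hu
      have e1 : u.1 = 0 := by have := S1 u hu; rwa [hWbot, Submodule.mem_bot] at this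
      have e2 : u.2.1 = 0 := by have := S2 u hu; rwa [hWbot, Submodule.mem_bot] at this
      have e3 : u.2.2.1 = 0 := by have := S3 u hu; rwa [hWbot, Submodule.mem_bot] at this
      have e4 : u.2.2.2 = 0 := by have := S4 u hu; rwa [hWbot, Submodule.mem_bot] at this
      exact Prod.ext_iff.mpr ⟨e1, Prod.ext_iff.mpr ⟨e2, Prod.ext_iff.mpr ⟨e3, e4⟩⟩⟩
    by_cases hWtop : W = ⊤
    · -- rho is affine : contradiction
      exfalso
      have hadd : ∀ a x : V n, ρ (a + x) = ρ x + ρ a := by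
        intro a x
        have haW : a ∈ W := by rw [hWtop]; trivial
        obtain ⟨u, hu, rfl⟩ := haW
        show ρ (u.2.2.2 + x) = ρ x + ρ u.2.2.2
        have m1 := hF1 u hu (0, 0, 0, x)
        have m2 := hF2 u hu
        have m3 := U.add_mem m1 m2
        have key : rhoBar ρ (u + (0, 0, 0, x)) + rhoBar ρ (0, 0, 0, x) + rhoBar ρ u
            = ((ρ (u.2.2.2 + x) + ρ x + ρ u.2.2.2, ρ (u.2.2.2 + x) + ρ x + ρ u.2.2.2,
                ρ (u.2.2.2 + x) + ρ x + ρ u.2.2.2, ρ (u.2.2.2 + x) + ρ x + ρ u.2.2.2) :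
                V n × V n × V n × V n) := by
          refine Prod.ext_iff.mpr ⟨?_, Prod.ext_iff.mpr ⟨?_, Prod.ext_iff.mpr ⟨?_, ?_⟩⟩⟩ <;>
            simp [rhoBar, Prod.ext_iff] <;> abel_nf <;> simp [twoMul, nsmulTwo, zsmulTwo]
        rw [key] at m3
        have hT' : ρ (u.2.2.2 + x) + ρ x + ρ u.2.2.2 ∈ T := (hTmem _).mpr m3
        rw [hTbot, Submodule.mem_bot] at hT'
        exact eq_of_add3 hT'
      apply hna
      refine ⟨{ toFun := ρ, invFun := ρ.symm,
                left_inv := ρ.left_inv, right_inv := ρ.right_inv,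
                map_add' := fun x y => by rw [hadd x y, add_comm],
                map_smul' := fun c x => by
                  have hc : ∀ c : ZMod 2, c = 0 ∨ c = 1 := by decide
                  rcases hc c with rfl | rfl
                  · simp [h0]
                  · simp }, 0, fun x => (add_zero (ρ x)).symm⟩
    · exact absurd ⟨W, hWbot, hWtop, hWimg⟩ hW
  · exact absurd ⟨T, hTbot, hTtop, hTimg⟩ hW
end

section
/- Let λ ∈ GL(F_2^{32}) be a linear map under which no nontrivial proper direct sum of the four 8-bit bricks is invariant, and let γ' be the parallel application of four copies of an 8-bit S-box γ with γ(0)=0 that is 4-differentially uniform and 1-anti-invariant. Then the group generated by the composition λ∘γ' together with all translations of F_2^{32} acts primitively on F_2^{32}. -/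
abbrev Byte := Fin 8 → ZMod 2
abbrev W32 := Fin 4 → Byte

lemma byte_add_self (x : Byte) : x + x = 0 := by
  funext j; exact CharTwo.add_self_eq_zero _

lemma w32_add_self (x : W32) : x + x = 0 := by
  funext i; exact byte_add_self _

lemma byte_neg (x : Byte) : -x = x := by
  rw [neg_eq_iff_add_eq_zero]; exact byte_add_self x

lemma card_image_diff (γ : Equiv.Perm Byte) (a : Byte)
    (hdu4 : ∀ b : Byte, Nat.card {x : Byte | γ x + γ (x + a) = b} ≤ 4) :
    64 ≤ (Set.range fun x => γ x + γ (x + a)).ncard := by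
  classical
  set f : Byte → Byte := fun x => γ x + γ (x + a) with hf
  have hcard : (Finset.univ : Finset Byte).card = 256 := by
    simp [Fintype.card_fun]
  have hsum : (Finset.univ : Finset Byte).card
      = ∑ b ∈ Finset.univ.image f, (Finset.univ.filter fun x => f x = b).card :=
    Finset.card_eq_sum_card_fiberwise (fun x _ => Finset.mem_image_of_mem f (Finset.mem_univ x))
  have hfib : ∀ b : Byte, (Finset.univ.filter fun x => f x = b).card ≤ 4 := by
    intro b
    have := hdu4 b
    rwa [Nat.card_coe_set_eq, Set.ncard_eq_toFinset_card', Set.toFinset_setOf] at this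
  have h1 : 256 ≤ (Finset.univ.image f).card * 4 := by
    rw [← hcard, hsum]
    calc ∑ b ∈ Finset.univ.image f, (Finset.univ.filter fun x => f x = b).card
        ≤ ∑ _b ∈ Finset.univ.image f, 4 := Finset.sum_le_sum fun b _ => hfib b
      _ = (Finset.univ.image f).card * 4 := by rw [Finset.sum_const, smul_eq_mul]
  have h2 : 64 ≤ (Finset.univ.image f).card := by omega
  have h3 : (Set.range f).ncard = (Finset.univ.image f).card := by
    rw [Set.ncard_eq_toFinset_card']
    apply Finset.card_nbij id (by intro b hb; simpa using hb) (fun _ _ _ _ h => h)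
    · intro b hb; simp at hb ⊢; exact ⟨hb.choose, hb.choose_spec⟩
  omega

lemma submodule_card_pow (X : Submodule (ZMod 2) Byte) :
    (X : Set Byte).ncard = 2 ^ (Module.finrank (ZMod 2) X) := by
  haveI : Fintype X := Fintype.ofFinite _
  rw [← Nat.card_coe_set_eq, Nat.card_eq_fintype_card]
  have h := Module.card_eq_pow_finrank (K := ZMod 2) (V := ↥X)
  rw [ZMod.card] at h
  exact (Fintype.card_congr (Equiv.refl _)).trans h

theorem spn_round_primitive
    (lam : W32 ≃ₗ[ZMod 2] W32)
    (hlam : ∀ I : Set (Fin 4), I ≠ ∅ → I ≠ Set.univ →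
      ¬ ((⇑lam) '' {x : W32 | ∀ i ∉ I, x i = 0} = {x : W32 | ∀ i ∉ I, x i = 0}))
    (γ : Equiv.Perm Byte) (h0 : γ 0 = 0)
    (hdu : ∀ a : Byte, a ≠ 0 → ∀ b : Byte,
      Nat.card {x : Byte | γ x + γ (x + a) = b} ≤ 4)
    (hai : ∀ W₁ W₂ : Submodule (ZMod 2) Byte, (⇑γ) '' (W₁ : Set Byte) = W₂ →
      (W₁ = ⊤ ∧ W₂ = ⊤) ∨
      (Module.finrank (ZMod 2) W₁ = Module.finrank (ZMod 2) W₂ ∧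
        Module.finrank (ZMod 2) W₁ < 8 - 1)) :
    IsPrimitivePermGroup
      (Subgroup.closure
        ({(Equiv.piCongrRight fun _ : Fin 4 => γ).trans lam.toEquiv} ∪
         {g : Equiv.Perm W32 | ∃ v : W32, g = Equiv.addRight v})) := by
  classical
  set τ : Equiv.Perm W32 := (Equiv.piCongrRight fun _ : Fin 4 => γ).trans lam.toEquiv with hτ
  set G := Subgroup.closure
      ({τ} ∪ {g : Equiv.Perm W32 | ∃ v : W32, g = Equiv.addRight v}) with hGdef
  have htrans : ∀ v : W32, Equiv.addRight v ∈ G := fun v =>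
    Subgroup.subset_closure (Or.inr ⟨v, rfl⟩)
  have hτG : τ ∈ G := Subgroup.subset_closure (Or.inl rfl)
  set gam : W32 → W32 := ⇑(Equiv.piCongrRight fun _ : Fin 4 => γ) with hgamdef
  have hgam_apply : ∀ (x : W32) (i : Fin 4), gam x i = γ (x i) := fun x i => rfl
  have hτ_apply : ∀ x : W32, τ x = lam (gam x) := fun x => rfl
  have hγsymm0 : γ.symm 0 = 0 := by
    have := γ.symm_apply_apply 0; rwa [h0] at this
  have hgam0 : gam 0 = 0 := by
    funext i; rw [hgam_apply]; exact h0
  have hτ0 : τ 0 = 0 := by rw [hτ_apply, hgam0, map_zero]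
  constructor
  · intro x y
    exact ⟨Equiv.addRight (y - x), htrans _, by simp⟩
  · rintro ⟨B, ⟨hne, huniq⟩, hnt, hinv⟩
    obtain ⟨V, ⟨hVB, hV0⟩, -⟩ := huniq 0
    have huni : ∀ x : W32, ∀ s ∈ B, x ∈ s → ∀ t ∈ B, x ∈ t → s = t := by
      intro x s hs hxs t ht hxt
      obtain ⟨b, -, hb⟩ := huniq x
      rw [hb s ⟨hs, hxs⟩, hb t ⟨ht, hxt⟩]
    have hcosB : ∀ x : W32, (⇑(Equiv.addRight x)) '' V ∈ B := fun x =>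
      hinv V hVB _ (htrans x)
    have hcosmem : ∀ x : W32, x ∈ (⇑(Equiv.addRight x)) '' V := fun x =>
      ⟨0, hV0, by simp⟩
    have hcoset : ∀ x : W32, ∀ s ∈ B, x ∈ s → s = (⇑(Equiv.addRight x)) '' V := by
      intro x s hs hxs
      exact huni x s hs hxs _ (hcosB x) (hcosmem x)
    have hadd : ∀ u ∈ V, ∀ v ∈ V, u + v ∈ V := by
      intro u hu v hv
      have h1 : (⇑(Equiv.addRight v)) '' V = V :=
        (huni v _ (hcosB v) (hcosmem v) V hVB hv)
      rw [← h1]; exact ⟨u, hu, rfl⟩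
    have hneg : ∀ x : W32, -x = x := by
      intro x; rw [neg_eq_iff_add_eq_zero]; exact w32_add_self x
    let Vgrp : AddSubgroup W32 :=
      { carrier := V
        add_mem' := fun ha hb => hadd _ ha _ hb
        zero_mem' := hV0
        neg_mem' := fun {x} hx => by rw [hneg]; exact hx }
    let Vsub : Submodule (ZMod 2) W32 := AddSubgroup.toZModSubmodule 2 Vgrp
    have hVsub : (Vsub : Set W32) = V := rfl
    -- τ '' V = V
    have hτV : ⇑τ '' V = V := by
      refine huni 0 _ (hinv V hVB τ hτG) ⟨0, hV0, hτ0⟩ V hVB hV0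
    have hlamW : ⇑lam '' (gam '' V) = V := by
      rw [← Set.image_comp]; exact hτV
    -- W as submodule
    let Wsub : Submodule (ZMod 2) W32 := Vsub.map (lam.symm : W32 →ₗ[ZMod 2] W32)
    have hWsubset : (Wsub : Set W32) = ⇑lam.symm '' V := rfl
    have hWeq : gam '' V = (Wsub : Set W32) := by
      rw [hWsubset]
      conv_rhs => rw [← hlamW, Set.image_image]
      simp only [LinearEquiv.symm_apply_apply, Set.image_id']
    -- star property
    have hstar : ∀ u : W32, ∀ v ∈ V, gam (v + u) + gam u ∈ Wsub := by
      intro u v hv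
      have hτsB : ⇑τ '' ((⇑(Equiv.addRight u)) '' V) ∈ B :=
        hinv _ (hcosB u) τ hτG
      have hτu_mem : τ u ∈ ⇑τ '' ((⇑(Equiv.addRight u)) '' V) :=
        ⟨u, hcosmem u, rfl⟩
      have hcos := hcoset (τ u) _ hτsB hτu_mem
      have hmem : τ (v + u) ∈ ⇑τ '' ((⇑(Equiv.addRight u)) '' V) :=
        ⟨v + u, ⟨v, hv, by simp⟩, rfl⟩
      rw [hcos] at hmem
      obtain ⟨w, hw, hweq⟩ := hmem
      simp only [Equiv.coe_addRight] at hweq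
      -- hweq : w + τ u = τ (v + u)
      have hkey : gam (v + u) + gam u = lam.symm w := by
        apply lam.injective
        rw [map_add, lam.apply_symm_apply]
        rw [← hτ_apply, ← hτ_apply, ← hweq]
        rw [add_assoc, w32_add_self (τ u), add_zero]
      rw [hkey, ← SetLike.mem_coe, hWsubset]
      exact ⟨w, hw, rfl⟩
    -- bricks
    let Ni : Fin 4 → Submodule (ZMod 2) Byte := fun i =>
      Submodule.comap (LinearMap.single (ZMod 2) (fun _ : Fin 4 => Byte) i) Vsub
    let Xi : Fin 4 → Submodule (ZMod 2) Byte := fun i =>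
      Submodule.comap (LinearMap.single (ZMod 2) (fun _ : Fin 4 => Byte) i) Wsub
    have hNmem : ∀ (i : Fin 4) (t : Byte), t ∈ Ni i ↔ Pi.single i t ∈ V := by
      intro i t
      exact Iff.rfl
    have hXmem : ∀ (i : Fin 4) (t : Byte), t ∈ Xi i ↔ Pi.single i t ∈ Wsub := by
      intro i t
      exact Iff.rfl
    have hgam_single : ∀ (i : Fin 4) (t : Byte), gam (Pi.single i t) = Pi.single i (γ t) := by
      intro i t; funext j
      rcases eq_or_ne j i with h | h
      · subst h; rw [hgam_apply, Pi.single_eq_same, Pi.single_eq_same]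
      · rw [hgam_apply, Pi.single_eq_of_ne h, Pi.single_eq_of_ne h, h0]
    have hNX : ∀ i : Fin 4, ⇑γ '' ((Ni i : Set Byte)) = (Xi i : Set Byte) := by
      intro i
      apply Set.Subset.antisymm
      · rintro - ⟨t, ht, rfl⟩
        rw [SetLike.mem_coe] at ht ⊢
        rw [hXmem, ← hgam_single]
        rw [hNmem] at ht
        rw [← SetLike.mem_coe, ← hWeq]
        exact ⟨Pi.single i t, ht, rfl⟩
      · intro x hx
        rw [SetLike.mem_coe, hXmem, ← SetLike.mem_coe, ← hWeq] at hx
        obtain ⟨v, hv, hveq⟩ := hx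
        have hvs : v = Pi.single i (γ.symm x) := by
          funext j
          have : γ (v j) = (Pi.single i x : W32) j := by rw [← hgam_apply, hveq]
          rcases eq_or_ne j i with h | h
          · subst h; rw [Pi.single_eq_same] at this
            rw [Pi.single_eq_same, ← this, Equiv.symm_apply_apply]
          · rw [Pi.single_eq_of_ne h] at this
            rw [Pi.single_eq_of_ne h, ← hγsymm0, ← this, Equiv.symm_apply_apply]
        refine ⟨γ.symm x, ?_, γ.apply_symm_apply x⟩
        rw [SetLike.mem_coe, hNmem, ← hvs]
        exact hv
    -- main brick lemma
    have hbrick : ∀ i : Fin 4, ∀ v₀ ∈ V, v₀ i ≠ 0 → ∀ t : Byte, Pi.single i t ∈ V := by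
      intro i v₀ hv₀V ha t
      rcases hai (Ni i) (Xi i) (hNX i) with ⟨hN, _⟩ | ⟨heq, hlt⟩
      · rw [← hNmem]; rw [hN]; trivial
      · exfalso
        -- step A
        have hA : ∀ v ∈ V, ∀ x y : Byte,
            (γ x + γ (x + v i)) + (γ y + γ (y + v i)) ∈ Xi i := by
          intro v hv x y
          have hx := hstar (Pi.single i x) v hv
          have hy := hstar (Pi.single i y) v hv
          have hsum := Submodule.add_mem Wsub hx hy
          have hform : (gam (v + Pi.single i x) + gam (Pi.single i x))
              + (gam (v + Pi.single i y) + gam (Pi.single i y))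
              = Pi.single i ((γ x + γ (x + v i)) + (γ y + γ (y + v i))) := by
            funext j
            rcases eq_or_ne j i with h | h
            · subst h
              simp only [Pi.add_apply, hgam_apply, Pi.single_eq_same]
              rw [add_comm (v j) x, add_comm (v j) y]
              abel
            · simp only [Pi.add_apply, hgam_apply, Pi.single_eq_of_ne h, add_zero, h0]
              rw [byte_add_self]
          rw [hform] at hsum
          exact (hXmem i _).2 hsum
        -- step B : finrank Xi = 6
        set a : Byte := v₀ i with hadef
        set d : Byte → Byte := fun x => γ x + γ (x + a) with hd
        have hd64 : 64 ≤ (Set.range d).ncard := card_image_diff γ a (hdu a ha)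
        have hrsub : Set.range d ⊆ (fun w => d 0 + w) '' (Xi i : Set Byte) := by
          rintro - ⟨x, rfl⟩
          refine ⟨d 0 + d x, ?_, by
            show d 0 + (d 0 + d x) = d x
            rw [← add_assoc, byte_add_self, zero_add]⟩
          exact hA v₀ hv₀V 0 x
        have hXicard : 64 ≤ ((Xi i : Set Byte)).ncard := by
          have h1 := Set.ncard_le_ncard hrsub (Set.toFinite _)
          rw [Set.ncard_image_of_injective _ (add_right_injective (d 0))] at h1
          exact le_trans hd64 h1
        have hXirank : Module.finrank (ZMod 2) (Xi i) = 6 := by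
          have hp := submodule_card_pow (Xi i)
          have h6 : 6 ≤ Module.finrank (ZMod 2) (Xi i) := by
            have h26 : (2:ℕ) ^ 6 ≤ 2 ^ Module.finrank (ZMod 2) (Xi i) := by
              rw [← hp]
              calc (2:ℕ) ^ 6 = 64 := by norm_num
                _ ≤ _ := hXicard
            exact (Nat.pow_le_pow_iff_right (by norm_num)).1 h26
          omega
        have hNicard : ((Ni i : Set Byte)).ncard = 64 := by
          rw [submodule_card_pow (Ni i)]
          have : Module.finrank (ZMod 2) (Ni i) = 6 := by omega
          rw [this]; norm_num
        obtain ⟨a', ha'N, ha'0⟩ : ∃ a' ∈ Ni i, a' ≠ 0 := by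
          by_contra hcon
          push_neg at hcon
          have hsub : (Ni i : Set Byte) ⊆ {0} := fun x hx => hcon x hx
          have := Set.ncard_le_ncard hsub (Set.finite_singleton 0)
          rw [hNicard, Set.ncard_singleton] at this
          omega
        -- step C
        set d' : Byte → Byte := fun x => γ x + γ (x + a') with hd'
        have hd'64 : 64 ≤ (Set.range d').ncard := card_image_diff γ a' (hdu a' ha'0)
        have hd'sub : Set.range d' ⊆ (Xi i : Set Byte) \ {0} := by
          rintro - ⟨x, rfl⟩
          constructor
          · have hst := hstar (Pi.single i x) (Pi.single i a') ((hNmem i a').2 ((hNmem i a').1 ha'N))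
            have hform' : gam (Pi.single i a' + Pi.single i x) + gam (Pi.single i x)
                = Pi.single i (γ x + γ (x + a')) := by
              funext j
              rcases eq_or_ne j i with h | h
              · subst h
                simp only [Pi.add_apply, hgam_apply, Pi.single_eq_same]
                rw [add_comm a' x]
                abel
              · simp only [Pi.add_apply, hgam_apply, Pi.single_eq_of_ne h, add_zero, h0]
            rw [hform'] at hst
            rw [SetLike.mem_coe]
            exact (hXmem i _).2 hst
          · simp only [Set.mem_singleton_iff]
            intro hz
            have hgg : γ x = γ (x + a') := by
              have h2 := add_eq_zero_iff_eq_neg.mp hz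
              rwa [byte_neg] at h2
            have hxx : x = x + a' := γ.injective hgg
            apply ha'0
            have h4 : x + (0 : Byte) = x + a' := by rw [add_zero]; exact hxx
            exact (add_left_cancel h4).symm
        have hXi64 : ((Xi i : Set Byte)).ncard = 64 := by
          rw [submodule_card_pow (Xi i), hXirank]; norm_num
        have hdiff : ((Xi i : Set Byte) \ {(0:Byte)}).ncard = 63 := by
          rw [Set.ncard_diff_singleton_of_mem ((Xi i).zero_mem), hXi64]
        have hle := Set.ncard_le_ncard hd'sub (Set.toFinite _)
        omega
    -- wall structure
    set I : Set (Fin 4) := {i | ∃ v ∈ V, v i ≠ 0} with hIdef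
    have hVwall : V = {x : W32 | ∀ i ∉ I, x i = 0} := by
      apply Set.Subset.antisymm
      · intro v hv i hiI
        by_contra hne0
        exact hiI ⟨v, hv, hne0⟩
      · intro x hx
        have hxsum : x = ∑ i : Fin 4, Pi.single i (x i) := (Finset.univ_sum_single x).symm
        rw [hxsum]
        have hmem : (∑ i : Fin 4, Pi.single i (x i)) ∈ Vsub := by
          apply Submodule.sum_mem
          intro i _
          by_cases hi : i ∈ I
          · obtain ⟨v₀, hv₀, hvi⟩ := hi
            exact hbrick i v₀ hv₀ hvi (x i)
          · have hz : x i = 0 := hx i hi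
            rw [hz, Pi.single_zero]
            exact Vsub.zero_mem
        exact hmem
    by_cases hIe : I = ∅
    · refine hnt (Or.inr ?_)
      have hV0' : V = {(0 : W32)} := by
        rw [hVwall, hIe]
        ext x
        simp only [Set.mem_setOf_eq, Set.mem_singleton_iff, Set.mem_empty_iff_false,
          not_false_iff, forall_true_left]
        constructor
        · intro h; funext i; exact h i
        · intro h i; rw [h]; rfl
      ext s
      simp only [Set.mem_setOf_eq]
      constructor
      · intro hs
        rcases Set.eq_empty_or_nonempty s with hemp | ⟨x, hx⟩
        · exact absurd (hemp ▸ hs) hne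
        refine ⟨x, ?_⟩
        rw [hcoset x s hs hx, hV0']
        ext z; simp
      · rintro ⟨x, rfl⟩
        have hB := hcosB x
        have heq2 : (⇑(Equiv.addRight x)) '' V = {x} := by
          rw [hV0']; ext z; simp
        rwa [heq2] at hB
    by_cases hIu : I = Set.univ
    · refine hnt (Or.inl ?_)
      have hVuniv : V = Set.univ := by
        rw [hVwall, hIu]; ext x; simp
      ext s
      simp only [Set.mem_singleton_iff]
      constructor
      · intro hs
        rcases Set.eq_empty_or_nonempty s with hemp | ⟨x, hx⟩
        · exact absurd (hemp ▸ hs) hne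
        rw [hcoset x s hs hx, hVuniv]
        ext z
        simp only [Set.mem_image, Set.mem_univ, iff_true, Equiv.coe_addRight]
        exact ⟨z - x, trivial, by simp⟩
      · rintro rfl
        rw [← hVuniv]
        exact hVB
    · exfalso
      refine hlam I hIe hIu ?_
      have hgamwall : gam '' {x : W32 | ∀ i ∉ I, x i = 0} = {x : W32 | ∀ i ∉ I, x i = 0} := by
        apply Set.Subset.antisymm
        · rintro - ⟨x, hx, rfl⟩ i hiI
          rw [hgam_apply, hx i hiI, h0]
        · intro x hx
          refine ⟨fun i => γ.symm (x i), fun i hiI => ?_, ?_⟩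
          · show γ.symm (x i) = 0
            rw [hx i hiI, hγsymm0]
          · funext i; rw [hgam_apply]; exact Equiv.apply_symm_apply γ (x i)
      rw [hVwall, hgamwall] at hlamW
      exact hlamW
end
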